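/- arXiv:math/0309025 — 2 statements merged into one kernel-verified Lean document; each statement's English description precedes it below -/
import Mathlib

section
/- The group Γ of plane isometries generated by reflections in the three sides of an equilateral triangle with side length 1 has the property that every nonidentity translation in Γ has translation vector of Euclidean length at least √3. -/
open Complex

/-- Reflection of the plane in the line through `a` with direction `d ≠ 0`. -/
noncomputable def reflectLine (a d : ℂ) : Function.End ℂ :=
  fun z => a + (d / (starRingEnd ℂ) d) * (starRingEnd ℂ) (z - a)

/-- The three reflections in the sides of the equilateral triangle with
vertices `0`, `1`, `e^{iπ/3}` (side length `1`). -/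
noncomputable def triangleReflections : Set (Function.End ℂ) :=
  { reflectLine 0 1,
    reflectLine 0 (Complex.exp (Real.pi * Complex.I / 3)),
    reflectLine 1 (Complex.exp (Real.pi * Complex.I / 3) - 1) }

/-!
Colour the vertices `a + b ζ` (`ζ = e^{iπ/3}`, `a b : ℤ`) of the triangle tiling by
`a - b mod 3`. Each side reflection of the triangle preserves the colour class `vertexClass`
of `0`, hence so does every element of the group; a translation `z ↦ z + v` in the group
therefore has `v = g 0 ∈ vertexClass`. On this class the norm form `a² + ab + b²` is divisible
by `3`, so a nonzero `v` has `‖v‖² ≥ 3`.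
-/

open Set

theorem Set.MapsTo.of_mem_submonoidClosure {α : Type*} {S : Set (Function.End α)} {s : Set α}
    (hS : ∀ f ∈ S, MapsTo f s s) {g : Function.End α} (hg : g ∈ Submonoid.closure S) :
    MapsTo g s s :=
  Submonoid.closure_induction hS (mapsTo_id s) (fun _ _ _ _ hf hg => hf.comp hg) hg

theorem Int.three_le_sq_add_mul_add_sq {a b : ℤ} (hab : 3 ∣ a - b) (hne : (a, b) ≠ (0, 0)) :
    3 ≤ a ^ 2 + a * b + b ^ 2 := by
  obtain ⟨k, hk⟩ := hab
  obtain rfl : a = b + 3 * k := by omega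
  have hpos : 0 < b ^ 2 + 3 * b * k + 3 * k ^ 2 := by
    by_contra! h
    have hk0 : k = 0 := by nlinarith [sq_nonneg (2 * b + 3 * k), sq_nonneg k]
    subst hk0
    have hb0 : b = 0 := by nlinarith
    simp_all
  nlinarith

namespace TriangleReflectionGroup

noncomputable def ζ : ℂ := exp (Real.pi * I / 3)

theorem ζ_eq : ζ = 1 / 2 + Real.sqrt 3 / 2 * I := by
  rw [ζ, show (Real.pi : ℂ) * I / 3 = (Real.pi / 3 : ℝ) * I by push_cast; ring, exp_mul_I,
    ← ofReal_cos, ← ofReal_sin, Real.cos_pi_div_three, Real.sin_pi_div_three]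
  push_cast
  ring

theorem ζ_re : ζ.re = 1 / 2 := by simp [ζ_eq]

theorem ζ_im : ζ.im = Real.sqrt 3 / 2 := by simp [ζ_eq]

theorem ζ_sq : ζ ^ 2 = ζ - 1 := by
  have h3 : (Real.sqrt 3 : ℂ) ^ 2 = 3 := by norm_cast; simp
  rw [ζ_eq]
  linear_combination I ^ 2 / 4 * h3 + 3 / 4 * I_sq

theorem conj_ζ : (starRingEnd ℂ) ζ = 1 - ζ := by
  apply Complex.ext <;> simp [ζ_re, ζ_im]; norm_num

theorem ζ_ne_zero : ζ ≠ 0 := exp_ne_zero _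

theorem conj_intCast_add_intCast_mul_ζ (a b : ℤ) :
    (starRingEnd ℂ) (a + b * ζ) = (a + b : ℤ) + (-b : ℤ) * ζ := by
  simp only [map_add, map_mul, map_intCast, conj_ζ]
  push_cast
  ring

theorem normSq_intCast_add_intCast_mul_ζ (a b : ℤ) :
    normSq (a + b * ζ) = ((a ^ 2 + a * b + b ^ 2 : ℤ) : ℝ) := by
  have h3 : Real.sqrt 3 ^ 2 = 3 := Real.sq_sqrt (by norm_num)
  simp only [normSq_apply, add_re, add_im, mul_re, mul_im, intCast_re, intCast_im, ζ_re, ζ_im]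
  push_cast
  linear_combination (b : ℝ) ^ 2 / 4 * h3

def vertexClass : Set ℂ := {z | ∃ a b : ℤ, z = a + b * ζ ∧ 3 ∣ a - b}

theorem zero_mem_vertexClass : (0 : ℂ) ∈ vertexClass := ⟨0, 0, by simp, by simp⟩

theorem sqrt_three_le_norm_of_mem_vertexClass {v : ℂ} (hv : v ∈ vertexClass) (hne : v ≠ 0) :
    Real.sqrt 3 ≤ ‖v‖ := by
  obtain ⟨a, b, rfl, hab⟩ := hv
  have hab0 : (a, b) ≠ (0, 0) := by
    rintro ⟨⟩
    simp at hne
  have h3 : (3 : ℝ) ≤ normSq (a + b * ζ) := by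
    rw [normSq_intCast_add_intCast_mul_ζ]
    exact_mod_cast Int.three_le_sq_add_mul_add_sq hab hab0
  rw [norm_def]
  exact Real.sqrt_le_sqrt h3

theorem reflectLine_zero_one (z : ℂ) : reflectLine 0 1 z = (starRingEnd ℂ) z := by
  simp [reflectLine]

theorem reflectLine_zero_ζ (z : ℂ) : reflectLine 0 ζ z = (ζ - 1) * (starRingEnd ℂ) z := by
  have hquot : ζ / (1 - ζ) = ζ - 1 := by
    rw [div_eq_iff (by rw [← conj_ζ]; simpa using ζ_ne_zero)]
    linear_combination ζ_sq
  simp [reflectLine, conj_ζ, hquot]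

theorem reflectLine_one_ζ_sub_one (z : ℂ) :
    reflectLine 1 (ζ - 1) z = 1 - ζ * (starRingEnd ℂ) (z - 1) := by
  have hquot : (ζ - 1) / (-ζ) = -ζ := by
    rw [div_eq_iff (neg_ne_zero.2 ζ_ne_zero)]
    linear_combination -ζ_sq
  simp only [reflectLine, map_sub, conj_ζ, map_one, sub_sub_cancel_left, hquot]
  ring

theorem mapsTo_vertexClass_of_mem_triangleReflections {f : Function.End ℂ}
    (hf : f ∈ triangleReflections) : MapsTo f vertexClass vertexClass := by
  rintro _ ⟨a, b, rfl, hab⟩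
  rcases hf with rfl | rfl | rfl
  · rw [reflectLine_zero_one, conj_intCast_add_intCast_mul_ζ]
    exact ⟨a + b, -b, rfl, by omega⟩
  · change reflectLine 0 ζ _ ∈ _
    rw [reflectLine_zero_ζ, conj_intCast_add_intCast_mul_ζ]
    refine ⟨-a, a + b, ?_, by omega⟩
    push_cast
    linear_combination (-b : ℂ) * ζ_sq
  · change reflectLine 1 (ζ - 1) _ ∈ _
    rw [reflectLine_one_ζ_sub_one,
      show (a : ℂ) + b * ζ - 1 = (a - 1 : ℤ) + b * ζ by push_cast; ring,
      conj_intCast_add_intCast_mul_ζ]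
    refine ⟨1 - b, 1 - a, ?_, by omega⟩
    push_cast
    linear_combination (b : ℂ) * ζ_sq

end TriangleReflectionGroup

open TriangleReflectionGroup

/-- In the group generated by the reflections in the sides of a unit
equilateral triangle, every nonidentity translation has translation vector of
length at least `√3`. -/
theorem shortest_translation_ge_sqrt_three :
    ∀ g ∈ Submonoid.closure triangleReflections,
      ∀ v : ℂ, v ≠ 0 → g = (fun z => z + v) → Real.sqrt 3 ≤ ‖v‖ := by
  intro g hg v hv rfl
  have hmaps : MapsTo (fun z => z + v) vertexClass vertexClass :=
    .of_mem_submonoidClosure (fun _ => mapsTo_vertexClass_of_mem_triangleReflections) hg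
  have hv_mem : v ∈ vertexClass := by simpa using hmaps zero_mem_vertexClass
  exact sqrt_three_le_norm_of_mem_vertexClass hv_mem hv
end

section
/- Let γ be a shortest closed non-contractible rectifiable curve in a compact surface with boundary homeomorphic to a closed annulus, equipped with an intrinsic metric. Then γ is a simple closed curve (homeomorphic to a circle). -/
/-!
Reparametrize `γ` by arc length as an `L`-periodic unit-speed curve `G`, where `L` is the length
of `γ`. If `G a = G b` with `0 ≤ a < b < L`, then `G` on `[a, b]` and `G` on `[b, a + L]` are
closed curves of lengths `b - a` and `L - (b - a)`, both shorter than `γ`, hence contractible by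
minimality. Their concatenation at `G a` is `G` on `[a, a + L]`, a rotation of `γ` and so freely
homotopic to it. Since a loop is freely contractible iff it is contractible rel its base point,
`γ` would be contractible. So `G` is injective on `[0, L)`, and the image of `γ` is a circle.
-/

open Set
open scoped ENNReal

/-- A closed curve `γ` (on `[0,1]`) in `X` which is not contractible. -/
def NCLoop {X : Type*} [TopologicalSpace X] (γ : ℝ → X) : Prop :=
  Continuous γ ∧ γ 0 = γ 1 ∧
  ¬ ∃ H : ℝ × ℝ → X, Continuous H ∧ (∀ t, H (0, t) = γ t) ∧
      (∀ t, H (1, t) = H (1, 0)) ∧ (∀ s, H (s, 0) = H (s, 1))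

open Function AffineMap

section FreeHomotopy

variable {X : Type*} [TopologicalSpace X]

def FreeHomotopic (f g : ℝ → X) : Prop :=
  ∃ H : ℝ × ℝ → X, Continuous H ∧ (∀ t, H (0, t) = f t) ∧ (∀ t, H (1, t) = g t) ∧
    ∀ s, H (s, 0) = H (s, 1)

def FreelyNullhomotopic (σ : ℝ → X) : Prop :=
  ∃ c, FreeHomotopic σ fun _ => c

theorem FreeHomotopic.trans {f g h : ℝ → X} (hfg : FreeHomotopic f g)
    (hgh : FreeHomotopic g h) : FreeHomotopic f h := by
  obtain ⟨H₁, hc₁, h₁0, h₁1, h₁l⟩ := hfg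
  obtain ⟨H₂, hc₂, h₂0, h₂1, h₂l⟩ := hgh
  refine ⟨fun p => if p.1 ≤ 1 / 2 then H₁ (2 * p.1, p.2) else H₂ (2 * p.1 - 1, p.2),
    ?_, fun t => ?_, fun t => ?_, fun s => ?_⟩
  · refine Continuous.if_le (by fun_prop) (by fun_prop) (by fun_prop) (by fun_prop) ?_
    rintro ⟨s, t⟩ (rfl : s = 1 / 2)
    norm_num [h₁1, h₂0]
  · norm_num [h₁0]
  · norm_num [h₂1]
  · dsimp only
    split_ifs
    exacts [h₁l _, h₂l _]

theorem FreeHomotopic.freelyNullhomotopic {f g : ℝ → X} (hfg : FreeHomotopic f g)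
    (hg : FreelyNullhomotopic g) : FreelyNullhomotopic f :=
  let ⟨c, hc⟩ := hg
  ⟨c, hfg.trans hc⟩

theorem ncLoop_iff {σ : ℝ → X} :
    NCLoop σ ↔ Continuous σ ∧ σ 0 = σ 1 ∧ ¬ FreelyNullhomotopic σ := by
  refine and_congr_right' (and_congr_right' (not_congr ⟨?_, ?_⟩))
  · rintro ⟨H, hc, h0, h1, hl⟩
    exact ⟨H (1, 0), H, hc, h0, h1, hl⟩
  · rintro ⟨c, H, hc, h0, h1, hl⟩
    exact ⟨H, hc, h0, fun t => by rw [h1, h1], hl⟩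

theorem freeHomotopic_comp_of_lineMap {Φ : ℝ → X} (hΦ : Continuous Φ) {A B : ℝ → ℝ}
    (hA : Continuous A) (hB : Continuous B)
    (h : ∀ s : ℝ, Φ (lineMap (A 0) (B 0) s) = Φ (lineMap (A 1) (B 1) s)) :
    FreeHomotopic (Φ ∘ A) (Φ ∘ B) :=
  ⟨fun p => Φ (lineMap (A p.2) (B p.2) p.1), by simp only [lineMap_apply_ring']; fun_prop,
    by simp, by simp, h⟩

theorem freeHomotopic_comp_projIcc {σ : ℝ → X} (hσ : Continuous σ) (hσ₀₁ : σ 0 = σ 1) :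
    FreeHomotopic σ fun t => σ (projIcc 0 1 zero_le_one t) :=
  freeHomotopic_comp_of_lineMap (A := id) hσ continuous_id continuous_projIcc.subtype_val
    (by simpa using hσ₀₁)

theorem freeHomotopic_comp_lineMap_of_periodic {Φ : ℝ → X} (hΦ : Continuous Φ) {L : ℝ}
    (hper : Periodic Φ L) {σ : ℝ → X} (hσ : Continuous σ) {v : ℝ → ℝ}
    (hv : ContinuousOn v (Icc 0 1)) (hv₀ : v 0 = 0) (hv₁ : v 1 = L)
    (hσv : EqOn σ (Φ ∘ v) (Icc 0 1)) (a : ℝ) :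
    FreeHomotopic σ (Φ ∘ lineMap a (a + L)) := by
  have h₀ : σ 0 = Φ 0 := by simpa [hv₀] using hσv ⟨le_rfl, zero_le_one⟩
  have h₁ : σ 1 = Φ 0 := by simpa [hv₁, hper.eq] using hσv ⟨zero_le_one, le_rfl⟩
  have hclamp : (fun t : ℝ => σ (projIcc 0 1 zero_le_one t)) =
      Φ ∘ fun t : ℝ => v (projIcc 0 1 zero_le_one t) :=
    funext fun t => hσv (projIcc (0 : ℝ) 1 zero_le_one t).2
  refine (freeHomotopic_comp_projIcc hσ (h₀.trans h₁.symm)).trans ?_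
  rw [hclamp]
  refine freeHomotopic_comp_of_lineMap hΦ
    (hv.comp_continuous continuous_projIcc.subtype_val fun t => (projIcc 0 1 _ t).2)
    lineMap_continuous fun s => ?_
  simp only [projIcc_left, projIcc_right, hv₀, hv₁, lineMap_apply_zero, lineMap_apply_one]
  rw [show lineMap L (a + L) s = lineMap 0 a s + L by simp only [lineMap_apply_ring']; ring, hper]

theorem FreelyNullhomotopic.ofLine_homotopic_refl {σ : ℝ → X} (hσ : Continuous σ) {x : X}
    (h₀ : σ 0 = x) (h₁ : σ 1 = x) (hnull : FreelyNullhomotopic σ) :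
    (Path.ofLine hσ.continuousOn h₀ h₁).Homotopic (Path.refl x) := by
  obtain ⟨c, H, hc, hH₀, hH₁, hl⟩ := hnull
  set p := Path.ofLine hσ.continuousOn h₀ h₁
  let F : ContinuousMap.Homotopy p.toContinuousMap (ContinuousMap.const unitInterval c) :=
    { toFun := fun q => H (q.1, q.2)
      continuous_toFun := by fun_prop
      map_zero_left := fun t => hH₀ t
      map_one_left := fun t => hH₁ t }
  -- The edges `t = 0` and `t = 1` of the square `H` trace the same path `β`,
  -- so `p ⬝ β ≃ β ⬝ refl c`.
  let β : Path x c := (F.evalAt 0).cast (by simp) (by simp)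
  have hsquare : (p.trans β).Homotopic (β.trans (Path.refl c)) := by
    have hF := Path.Homotopic.map_trans_evalAt F Path.id
    have e₁ : (Path.id.map (map_continuous _)).trans (F.evalAt 1) =
        (p.trans β).cast (by simp) (by simp) := by
      ext t
      change _ = (p.trans β) t
      simp only [Path.trans_apply]
      split_ifs
      exacts [rfl, (hl _).symm]
    have e₂ : (F.evalAt 0).trans (Path.id.map (map_continuous _)) =
        (β.trans (Path.refl c)).cast (by simp) (by simp) := by
      ext t
      change _ = (β.trans (Path.refl c)) t
      simp only [Path.trans_apply]
      split_ifs <;> rfl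
    rwa [e₁, e₂] at hF
  rw [← Path.Homotopic.Quotient.eq] at hsquare ⊢
  simp only [Path.Homotopic.Quotient.mk_trans, Path.Homotopic.Quotient.mk_refl] at hsquare ⊢
  calc Path.Homotopic.Quotient.mk p
      = ((Path.Homotopic.Quotient.mk p).trans (Path.Homotopic.Quotient.mk β)).trans
          (Path.Homotopic.Quotient.mk β).symm := by simp
    _ = _ := by rw [hsquare]; simp

theorem Path.ofLine_homotopic_refl_iff {σ : ℝ → X} (hσ : Continuous σ) {x : X}
    (h₀ : σ 0 = x) (h₁ : σ 1 = x) :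
    (Path.ofLine hσ.continuousOn h₀ h₁).Homotopic (Path.refl x) ↔ FreelyNullhomotopic σ := by
  refine ⟨fun ⟨F⟩ => ⟨x, (freeHomotopic_comp_projIcc hσ (h₀.trans h₁.symm)).trans ?_⟩,
    FreelyNullhomotopic.ofLine_homotopic_refl hσ h₀ h₁⟩
  exact ⟨fun q => F (projIcc 0 1 zero_le_one q.1, projIcc 0 1 zero_le_one q.2),
    by fun_prop, fun t => by dsimp only; rw [projIcc_left]; exact F.apply_zero _,
    fun t => by simp, fun s => by simp⟩

theorem FreelyNullhomotopic.comp_lineMap_trans {Φ : ℝ → X} (hΦ : Continuous Φ)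
    {x y z : ℝ} (hy : Φ y = Φ x) (hz : Φ z = Φ x)
    (hxy : FreelyNullhomotopic (Φ ∘ lineMap x y)) (hyz : FreelyNullhomotopic (Φ ∘ lineMap y z)) :
    FreelyNullhomotopic (Φ ∘ lineMap x z) := by
  let P (u v : ℝ) (hu : Φ u = Φ x) (hv : Φ v = Φ x) : Path (Φ x) (Φ x) :=
    Path.ofLine (f := Φ ∘ lineMap u v) (hΦ.comp lineMap_continuous).continuousOn
      (by simpa using hu) (by simpa using hv)
  have hP : ∀ u v hu hv, P u v hu hv = ((Path.segment u v).map hΦ).cast hu.symm hv.symm :=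
    fun _ _ _ _ => rfl
  have hsplit : (P x z rfl hz).Homotopic ((P x y rfl hy).trans (P y z hy hz)) := by
    have hℝ := (SimplyConnectedSpace.paths_homotopic (Path.segment x z)
      ((Path.segment x y).trans (Path.segment y z))).map ⟨Φ, hΦ⟩
    rw [Path.map_trans] at hℝ
    rwa [hP x z rfl hz, hP x y rfl hy, hP y z hy hz]
  have hnull : ∀ u v hu hv,
      (P u v hu hv).Homotopic (Path.refl _) ↔ FreelyNullhomotopic (Φ ∘ lineMap u v) :=
    fun _ _ _ _ => Path.ofLine_homotopic_refl_iff (hΦ.comp lineMap_continuous) _ _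
  exact (hnull x z rfl hz).1 <| hsplit.trans <|
    (((hnull x y rfl hy).2 hxy).hcomp ((hnull y z hy hz).2 hyz)).trans ⟨.reflTrans _⟩

theorem exists_continuous_periodic_eqOn {g : ℝ → X} {L : ℝ} (hL : 0 < L)
    (hg : ContinuousOn g (Icc 0 L)) (hg₀L : g 0 = g L) :
    ∃ G : ℝ → X, Continuous G ∧ Periodic G L ∧ EqOn G g (Icc 0 L) := by
  have : Fact (0 < L) := ⟨hL⟩
  refine ⟨fun x => AddCircle.liftIco L 0 g x, (AddCircle.liftIco_zero_continuous hg₀L hg).comp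
    (AddCircle.continuous_mk' L), fun x => by simp, ?_⟩
  rintro x ⟨hx₀, hxL⟩
  rcases hxL.lt_or_eq with hxL | rfl
  · exact AddCircle.liftIco_zero_coe_apply ⟨hx₀, hxL⟩
  · simp only [AddCircle.coe_period, ← hg₀L]
    exact AddCircle.liftIco_zero_coe_apply ⟨le_rfl, hL⟩

theorem Function.Periodic.nonempty_image_Icc_homeomorph_circle [T2Space X] {G : ℝ → X} {L : ℝ}
    (hL : 0 < L) (hG : Continuous G) (hper : Periodic G L) (hinj : InjOn G (Ico 0 L)) :
    Nonempty (G '' Icc 0 L ≃ₜ Circle) := by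
  have : Fact (0 < L) := ⟨hL⟩
  set F := AddCircle.liftIco L 0 G
  have hF : Continuous F :=
    AddCircle.liftIco_zero_continuous (by simpa using hper.eq.symm) hG.continuousOn
  have hFG : ∀ x ∈ Ico 0 L, F x = G x := fun x hx => AddCircle.liftIco_zero_coe_apply hx
  have hcoe : ∀ q : AddCircle L, ∃ x ∈ Ico 0 L, (x : AddCircle L) = q := fun q => by
    have hq := AddCircle.coe_image_Ico_eq L 0 ▸ mem_univ q
    simpa using hq
  have hFinj : Injective F := by
    intro q₁ q₂ h
    obtain ⟨x₁, hx₁, rfl⟩ := hcoe q₁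
    obtain ⟨x₂, hx₂, rfl⟩ := hcoe q₂
    rw [hinj hx₁ hx₂ (by rwa [← hFG x₁ hx₁, ← hFG x₂ hx₂])]
  have hrange : range F = G '' Icc 0 L := by
    ext y
    constructor
    · rintro ⟨q, rfl⟩
      obtain ⟨x, hx, rfl⟩ := hcoe q
      exact ⟨x, Ico_subset_Icc_self hx, (hFG x hx).symm⟩
    · rintro ⟨x, ⟨hx₀, hxL⟩, rfl⟩
      rcases hxL.lt_or_eq with hxL | rfl
      · exact ⟨x, hFG x ⟨hx₀, hxL⟩⟩
      · exact ⟨(0 : ℝ), by rw [hFG 0 ⟨le_rfl, hL⟩, hper.eq]⟩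
  exact ⟨(Homeomorph.setCongr hrange.symm).trans
    ((hF.isClosedEmbedding hFinj).isEmbedding.toHomeomorph.symm.trans
      (AddCircle.homeomorphCircle hL.ne'))⟩

end FreeHomotopy

section UnitSpeed

variable {E : Type*} [PseudoEMetricSpace E]

theorem HasUnitSpeedOn.lipschitzOnWith {f : ℝ → E} {s : Set ℝ} (h : HasUnitSpeedOn f s) :
    LipschitzOnWith 1 f s := by
  intro x hx y hy
  wlog hxy : x ≤ y generalizing x y
  · rw [edist_comm, edist_comm x]
    exact this hy hx (le_of_not_ge hxy)
  calc edist (f x) (f y) ≤ eVariationOn f (s ∩ Icc x y) :=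
        eVariationOn.edist_le f ⟨hx, le_rfl, hxy⟩ ⟨hy, hxy, le_rfl⟩
    _ = ENNReal.ofReal (y - x) := by rw [h hx hy, NNReal.coe_one, one_mul]
    _ = 1 * edist x y := by
        rw [one_mul, edist_dist, Real.dist_eq, abs_sub_comm, abs_of_nonneg (sub_nonneg.2 hxy)]

theorem HasUnitSpeedOn.eVariationOn_Icc {f : ℝ → E} {s : Set ℝ} [s.OrdConnected]
    (h : HasUnitSpeedOn f s) {x y : ℝ} (hx : x ∈ s) (hy : y ∈ s) :
    eVariationOn f (Icc x y) = ENNReal.ofReal (y - x) := by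
  rw [← inter_eq_right.2 (Set.Icc_subset s hx hy), h hx hy, NNReal.coe_one, one_mul]

theorem Function.Periodic.hasUnitSpeedOn_Icc_add {G : ℝ → E} {L : ℝ} (hper : Periodic G L)
    (h : HasUnitSpeedOn G (Icc 0 L)) : HasUnitSpeedOn G (Icc L (L + L)) := by
  intro x hx y hy
  have hshift : Icc x y = (· + L) '' Icc (x - L) (y - L) := by simp
  rw [NNReal.coe_one, one_mul, inter_eq_right.2 (Set.Icc_subset _ hx hy), hshift,
    ← eVariationOn.comp_eq_of_monotoneOn _ (· + L) (fun _ _ _ _ h => by simpa using h),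
    show G ∘ (· + L) = G from funext hper,
    h.eVariationOn_Icc ⟨by linarith [hx.1], by linarith [hx.2]⟩
      ⟨by linarith [hy.1], by linarith [hy.2]⟩]
  ring_nf

theorem eVariationOn_comp_lineMap (f : ℝ → E) {x y : ℝ} (hxy : x ≤ y) :
    eVariationOn (f ∘ (lineMap x y : ℝ → ℝ)) (Icc 0 1) = eVariationOn f (Icc x y) := by
  rw [eVariationOn.comp_eq_of_monotoneOn _ _ ((lineMap_mono hxy).monotoneOn _),
    ← segment_eq_image_lineMap, segment_eq_Icc hxy]

end UnitSpeed

theorem LocallyBoundedVariationOn.continuousOn_variationOnFromTo {α E : Type*} [LinearOrder α]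
    [TopologicalSpace α] [OrderTopology α] [PseudoMetricSpace E] {f : α → E} {s : Set α}
    (hf : LocallyBoundedVariationOn f s) (hc : ContinuousOn f s) {a : α} (ha : a ∈ s) :
    ContinuousOn (variationOnFromTo f s a) s := by
  intro b hb
  have hleft := variationOnFromTo.tendsto_left ha hb hf ((hc b hb).mono inter_subset_left)
  have hright := variationOnFromTo.tendsto_right ha hb hf ((hc b hb).mono inter_subset_left)
  rw [dist_self, sub_zero] at hleft
  rw [dist_self, add_zero] at hright
  have hs : s ⊆ insert b ((s ∩ Iio b) ∪ (s ∩ Ioi b)) := fun t ht => by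
    rcases lt_trichotomy t b with h | rfl | h
    exacts [Or.inr (Or.inl ⟨ht, h⟩), Or.inl rfl, Or.inr (Or.inr ⟨ht, h⟩)]
  exact (continuousWithinAt_insert_self.2 (ContinuousWithinAt.union hleft hright)).mono hs

section ShortestLoop

variable {X : Type*} [MetricSpace X]

theorem NCLoop.eVariationOn_ne_zero {γ : ℝ → X} (hγ : NCLoop γ) :
    eVariationOn γ (Icc 0 1) ≠ 0 := by
  obtain ⟨hγc, hγ₀₁, hess⟩ := ncLoop_iff.1 hγ
  intro h0
  have hconst : ∀ t : ℝ, γ (projIcc 0 1 zero_le_one t) = γ 0 := fun t =>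
    edist_eq_zero.1 ((eVariationOn.eq_zero_iff γ).1 h0 _ (projIcc (0 : ℝ) 1 zero_le_one t).2 0
      ⟨le_rfl, zero_le_one⟩)
  exact hess ⟨γ 0, by simpa only [hconst] using freeHomotopic_comp_projIcc hγc hγ₀₁⟩

theorem exists_periodic_unitSpeed_param {γ : ℝ → X} (hγ : Continuous γ) (hγ₀₁ : γ 0 = γ 1)
    {L : ℝ} (hL : 0 < L) (hlen : eVariationOn γ (Icc 0 1) = ENNReal.ofReal L) :
    ∃ G : ℝ → X, Continuous G ∧ Periodic G L ∧ HasUnitSpeedOn G (Icc 0 L) ∧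
      G '' Icc 0 L = γ '' Icc 0 1 ∧ ∀ a, FreeHomotopic γ (G ∘ lineMap a (a + L)) := by
  have h₀ : (0 : ℝ) ∈ Icc (0 : ℝ) 1 := ⟨le_rfl, zero_le_one⟩
  have hBV : LocallyBoundedVariationOn γ (Icc 0 1) :=
    BoundedVariationOn.locallyBoundedVariationOn (by
      rw [BoundedVariationOn, hlen]; exact ENNReal.ofReal_ne_top)
  set v := variationOnFromTo γ (Icc 0 1) 0
  set g := naturalParameterization γ (Icc 0 1) 0
  have hv : ContinuousOn v (Icc 0 1) := hBV.continuousOn_variationOnFromTo hγ.continuousOn h₀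
  have hv₀ : v 0 = 0 := variationOnFromTo.self _ _ _
  have hv₁ : v 1 = L := by simp [v, variationOnFromTo.eq_of_le _ _ zero_le_one, hlen, hL.le]
  have himage : v '' Icc 0 1 = Icc 0 L := by
    rw [hv.image_Icc_of_monotoneOn zero_le_one (variationOnFromTo.monotoneOn hBV h₀), hv₀, hv₁]
  have hγg : EqOn γ (g ∘ v) (Icc 0 1) := fun t ht =>
    (edist_eq_zero.1 (edist_naturalParameterization_eq_zero hBV h₀ ht)).symm
  have hg : HasUnitSpeedOn g (Icc 0 L) := himage ▸ has_unit_speed_naturalParameterization γ hBV h₀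
  have hg₀L : g 0 = g L := by
    rw [← hv₀, ← hv₁]
    exact (hγg h₀).symm.trans (hγ₀₁.trans (hγg ⟨zero_le_one, le_rfl⟩))
  obtain ⟨G, hGc, hper, hGg⟩ :=
    exists_continuous_periodic_eqOn hL hg.lipschitzOnWith.continuousOn hg₀L
  have hγG : EqOn γ (G ∘ v) (Icc 0 1) := fun t ht => by
    rw [hγg ht, Function.comp_apply, Function.comp_apply, hGg (himage ▸ mem_image_of_mem v ht)]
  refine ⟨G, hGc, hper, fun x hx y hy => ?_, ?_,
    freeHomotopic_comp_lineMap_of_periodic hGc hper hγ hv hv₀ hv₁ hγG⟩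
  · rw [eVariationOn.eq_of_eqOn (hGg.mono inter_subset_left), hg hx hy]
  · rw [image_congr hGg, ← himage, image_image]
    exact image_congr fun t ht => (hγg ht).symm

theorem injOn_Ico_of_shorter_loops_freelyNullhomotopic {G : ℝ → X} {L : ℝ} (hG : Continuous G)
    (hper : Periodic G L) (hunit : HasUnitSpeedOn G (Icc 0 L))
    (hshort : ∀ σ : ℝ → X, Continuous σ → σ 0 = σ 1 →
      eVariationOn σ (Icc 0 1) < ENNReal.ofReal L → FreelyNullhomotopic σ)
    (hess : ∀ a, ¬ FreelyNullhomotopic (G ∘ lineMap a (a + L))) :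
    InjOn G (Ico 0 L) := by
  have hunit₂ : HasUnitSpeedOn G (Icc 0 (L + L)) :=
    hunit.Icc_Icc (hper.hasUnitSpeedOn_Icc_add hunit)
  have hloop : ∀ x y, 0 ≤ x → x ≤ y → y ≤ L + L → G y = G x → y - x < L →
      FreelyNullhomotopic (G ∘ lineMap x y) := fun x y hx hxy hy hGxy hyx =>
    hshort _ (hG.comp lineMap_continuous) (by simpa using hGxy.symm) <| by
      rw [eVariationOn_comp_lineMap _ hxy,
        hunit₂.eVariationOn_Icc ⟨hx, by linarith⟩ ⟨by linarith, hy⟩]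
      exact (ENNReal.ofReal_lt_ofReal_iff (by linarith)).2 hyx
  intro a ha b hb hab
  by_contra hne
  wlog hlt : a < b generalizing a b
  · exact this hb ha hab.symm (Ne.symm hne) ((Ne.symm hne).lt_of_le (not_lt.1 hlt))
  exact hess a <| FreelyNullhomotopic.comp_lineMap_trans hG hab.symm (hper a)
    (hloop a b ha.1 hlt.le (by linarith [hb.2, ha.1]) hab.symm (by linarith [hb.2, ha.1]))
    (hloop b (a + L) (by linarith [hb.1]) (by linarith [hb.2, ha.1]) (by linarith [ha.2])
      (by rw [hper, hab]) (by linarith))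

end ShortestLoop

theorem shortest_noncontractible_curve_is_simple_general
    (X : Type*) [MetricSpace X]
    (γ : ℝ → X) (hγ : NCLoop γ)
    (hrect : eVariationOn γ (Set.Icc 0 1) < ⊤)
    (hmin : ∀ σ : ℝ → X, NCLoop σ →
      eVariationOn γ (Set.Icc 0 1) ≤ eVariationOn σ (Set.Icc 0 1)) :
    Nonempty ((γ '' Set.Icc 0 1) ≃ₜ Circle) := by
  obtain ⟨hγc, hγ₀₁, hess⟩ := ncLoop_iff.1 hγ
  set L := (eVariationOn γ (Icc 0 1)).toReal
  have hlen : eVariationOn γ (Icc 0 1) = ENNReal.ofReal L := (ENNReal.ofReal_toReal hrect.ne).symm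
  have hL : 0 < L := ENNReal.toReal_pos hγ.eVariationOn_ne_zero hrect.ne
  obtain ⟨G, hG, hper, hunit, himage, hrot⟩ := exists_periodic_unitSpeed_param hγc hγ₀₁ hL hlen
  have hinj : InjOn G (Ico 0 L) := by
    refine injOn_Ico_of_shorter_loops_freelyNullhomotopic hG hper hunit
      (fun σ hσ hσ₀₁ hσL => ?_) fun a hnull => hess ((hrot a).freelyNullhomotopic hnull)
    by_contra hnull
    exact (hmin σ (ncLoop_iff.2 ⟨hσ, hσ₀₁, hnull⟩)).not_gt (hlen ▸ hσL)
  rw [← himage]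
  exact hper.nonempty_image_Icc_homeomorph_circle hL hG hinj

/-- A shortest closed non-contractible rectifiable curve in a compact annulus
with an intrinsic metric is a simple closed curve: its image is homeomorphic to
a circle. -/
theorem shortest_noncontractible_curve_is_simple
    (X : Type*) [MetricSpace X]
    (hhomeo : Nonempty (X ≃ₜ {z : ℂ | 1 ≤ ‖z‖ ∧ ‖z‖ ≤ 2}))
    (hintrinsic : ∀ x y : X, edist x y =
      ⨅ (γ : ℝ → X) (_ : Continuous γ) (_ : γ 0 = x) (_ : γ 1 = y),
        eVariationOn γ (Set.Icc 0 1))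
    (γ : ℝ → X) (hγ : NCLoop γ)
    (hrect : eVariationOn γ (Set.Icc 0 1) < ⊤)
    (hmin : ∀ σ : ℝ → X, NCLoop σ →
      eVariationOn γ (Set.Icc 0 1) ≤ eVariationOn σ (Set.Icc 0 1)) :
    Nonempty ((γ '' Set.Icc 0 1) ≃ₜ Circle) :=
  shortest_noncontractible_curve_is_simple_general X γ hγ hrect hmin
end
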